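/- arXiv:hep-th/0301119 — 2 statements merged into one kernel-verified Lean document; each statement's English description precedes it below -/
import Mathlib

section
/- Writing A = 2n + 1 - nT₊ - T₋n where (nλ)_n = nλ_n, (T₊λ)_n = λ_{n-1} (with (T₊λ)_0 = 0), and (T₋λ)_n = λ_{n+1}, and defining K = (i/2)(nT₊ - T₋n), the commutator satisfies i[A, K] = A on finitely supported sequences. -/
open Complex

/-- The number operator `(nλ)_n = n λ_n`. -/
noncomputable def Nop (l : ℕ → ℂ) (n : ℕ) : ℂ := n * l n

/-- The right shift `(T₊λ)_n = λ_{n-1}`, with `(T₊λ)_0 = 0`. -/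
noncomputable def Tplus (l : ℕ → ℂ) (n : ℕ) : ℂ := if n = 0 then 0 else l (n - 1)

/-- The left shift `(T₋λ)_n = λ_{n+1}`. -/
noncomputable def Tminus (l : ℕ → ℂ) (n : ℕ) : ℂ := l (n + 1)

/-- `A = 2n + 1 - n T₊ - T₋ n`. -/
noncomputable def Aop (l : ℕ → ℂ) (n : ℕ) : ℂ :=
  2 * Nop l n + l n - Nop (Tplus l) n - Tminus (Nop l) n

/-- `K = (i/2)(n T₊ - T₋ n)`. -/
noncomputable def Kop (l : ℕ → ℂ) (n : ℕ) : ℂ :=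
  (I / 2) * (Nop (Tplus l) n - Tminus (Nop l) n)

/-! The identity is algebraic: it holds in any ℂ-algebra in which `n, T₊, T₋, P₀` satisfy
`[n, T±] = ±T±`, `[T₊, T₋] = -P₀`, `T₋T₊ = 1` and `nP₀ = 0`. Then `[n, nT₊] = nT₊`,
`[n, T₋n] = -T₋n`, and, since `T₊T₋ = 1 - P₀` and `T₋n = (n + 1)T₋`,
`[nT₊, T₋n] = n² - (n + 1)² = -(2n + 1)`. Adding up, `[A, nT₊ - T₋n] = -2A`, so `i[A, K] = A`. -/

section CommutationRelations

variable {R : Type*} [Ring R] {N Tp Tm P : R}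

def opA (N Tp Tm : R) : R := 2 * N + 1 - N * Tp - Tm * N

theorem lie_mul_eq_of_lie_eq_self (hTp : ⁅N, Tp⁆ = Tp) : ⁅N, N * Tp⁆ = N * Tp := by
  rw [Ring.lie_def] at hTp ⊢
  calc N * (N * Tp) - N * Tp * N = N * (N * Tp - Tp * N) := by noncomm_ring
    _ = N * Tp := by rw [hTp]

theorem lie_mul_eq_of_lie_eq_neg (hTm : ⁅N, Tm⁆ = -Tm) : ⁅N, Tm * N⁆ = -(Tm * N) := by
  rw [Ring.lie_def] at hTm ⊢
  calc N * (Tm * N) - Tm * N * N = (N * Tm - Tm * N) * N := by noncomm_ring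
    _ = -(Tm * N) := by rw [hTm, neg_mul]

theorem lie_mul_mul_eq_neg_two_mul_add_one (hTm : ⁅N, Tm⁆ = -Tm) (hTpTm : ⁅Tp, Tm⁆ = -P)
    (hTmTp : Tm * Tp = 1) (hNP : N * P = 0) : ⁅N * Tp, Tm * N⁆ = -(2 * N + 1) := by
  have hTpTm' : Tp * Tm = 1 - P := by
    rw [Ring.lie_def, hTmTp, ← sub_eq_zero] at hTpTm
    rw [← sub_eq_zero, ← hTpTm]; noncomm_ring
  have hTmN : Tm * N = (N + 1) * Tm := by
    rw [Ring.lie_def, ← sub_eq_zero] at hTm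
    rw [← sub_eq_zero, ← neg_eq_zero, ← hTm]; noncomm_ring
  have hTmNN : Tm * N * N = (N + 1) * (N + 1) * Tm := by
    rw [hTmN, mul_assoc, hTmN, mul_assoc]
  calc ⁅N * Tp, Tm * N⁆ = N * (Tp * Tm) * N - Tm * N * N * Tp := by
        rw [Ring.lie_def]; noncomm_ring
    _ = N * N - (N + 1) * (N + 1) * (Tm * Tp) := by
        rw [hTpTm', mul_sub, mul_one, sub_mul, hNP, zero_mul, sub_zero, hTmNN, mul_assoc]
    _ = -(2 * N + 1) := by rw [hTmTp]; noncomm_ring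

theorem lie_opA_eq (hTp : ⁅N, Tp⁆ = Tp) (hTm : ⁅N, Tm⁆ = -Tm) (hTpTm : ⁅Tp, Tm⁆ = -P)
    (hTmTp : Tm * Tp = 1) (hNP : N * P = 0) :
    ⁅opA N Tp Tm, N * Tp - Tm * N⁆ = -(2 * opA N Tp Tm) :=
  calc ⁅opA N Tp Tm, N * Tp - Tm * N⁆
      = 2 * ⁅N, N * Tp⁆ - 2 * ⁅N, Tm * N⁆ + 2 * ⁅N * Tp, Tm * N⁆ := by
        simp only [opA, Ring.lie_def]; noncomm_ring
    _ = 2 * (N * Tp) - 2 * -(Tm * N) + 2 * -(2 * N + 1) := by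
        rw [lie_mul_eq_of_lie_eq_self hTp, lie_mul_eq_of_lie_eq_neg hTm,
          lie_mul_mul_eq_neg_two_mul_add_one hTm hTpTm hTmTp hNP]
    _ = -(2 * opA N Tp Tm) := by rw [opA]; noncomm_ring

variable [Algebra ℂ R]

noncomputable def opK (N Tp Tm : R) : R := (I / 2) • (N * Tp - Tm * N)

theorem I_smul_lie_opA_opK (hTp : ⁅N, Tp⁆ = Tp) (hTm : ⁅N, Tm⁆ = -Tm)
    (hTpTm : ⁅Tp, Tm⁆ = -P) (hTmTp : Tm * Tp = 1) (hNP : N * P = 0) :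
    I • ⁅opA N Tp Tm, opK N Tp Tm⁆ = opA N Tp Tm := by
  have hI : I * (I / 2) = -2⁻¹ := by rw [mul_div_assoc', I_mul_I]; ring
  rw [opK, Ring.lie_def, mul_smul_comm, smul_mul_assoc, ← smul_sub, ← Ring.lie_def,
    lie_opA_eq hTp hTm hTpTm hTmTp hNP, smul_smul, hI, neg_smul_neg, two_mul, smul_add,
    ← add_smul]
  norm_num

end CommutationRelations

section SequenceOperators

noncomputable def numberOp : Module.End ℂ (ℕ → ℂ) where
  toFun := Nop
  map_add' _ _ := funext fun _ => mul_add _ _ _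
  map_smul' _ _ := funext fun _ => mul_left_comm _ _ _

@[simp]
theorem numberOp_apply (l : ℕ → ℂ) : numberOp l = Nop l := rfl

noncomputable def shiftRight : Module.End ℂ (ℕ → ℂ) where
  toFun := Tplus
  map_add' l m := funext fun n => by
    simp only [Tplus, Pi.add_apply]; split_ifs <;> simp
  map_smul' c l := funext fun n => by
    simp only [Tplus, Pi.smul_apply, RingHom.id_apply]; split_ifs <;> simp

@[simp]
theorem shiftRight_apply (l : ℕ → ℂ) : shiftRight l = Tplus l := rfl

noncomputable def shiftLeft : Module.End ℂ (ℕ → ℂ) where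
  toFun := Tminus
  map_add' _ _ := rfl
  map_smul' _ _ := rfl

@[simp]
theorem shiftLeft_apply (l : ℕ → ℂ) : shiftLeft l = Tminus l := rfl

noncomputable def projZero : Module.End ℂ (ℕ → ℂ) :=
  LinearMap.single ℂ (fun _ => ℂ) 0 ∘ₗ LinearMap.proj 0

theorem numberOp_lie_shiftRight : ⁅numberOp, shiftRight⁆ = shiftRight := by
  ext l n
  rcases n with _ | n
  · simp [Ring.lie_def, Nop, Tplus]
  · simp only [Ring.lie_def, LinearMap.sub_apply, Module.End.mul_apply, numberOp_apply,
      shiftRight_apply, Pi.sub_apply, Nop, Tplus, Nat.add_one_ne_zero, if_false,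
      Nat.add_sub_cancel, Nat.cast_succ]
    ring

theorem numberOp_lie_shiftLeft : ⁅numberOp, shiftLeft⁆ = -shiftLeft := by
  ext l n
  simp only [Ring.lie_def, LinearMap.sub_apply, LinearMap.neg_apply, Module.End.mul_apply,
    numberOp_apply, shiftLeft_apply, Pi.sub_apply, Pi.neg_apply, Nop, Tminus, Nat.cast_succ]
  ring

theorem shiftRight_lie_shiftLeft : ⁅shiftRight, shiftLeft⁆ = -projZero := by
  ext l n
  rcases n with _ | n <;> simp [Ring.lie_def, projZero, Tplus, Tminus]

theorem shiftLeft_mul_shiftRight : shiftLeft * shiftRight = 1 := by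
  ext l n
  simp [Tplus, Tminus]

theorem numberOp_mul_projZero : numberOp * projZero = 0 := by
  ext l n
  rcases n with _ | n <;> simp [projZero, Nop]

theorem opA_apply (l : ℕ → ℂ) : opA numberOp shiftRight shiftLeft l = Aop l := by
  funext n
  simp [opA, Aop]

theorem opK_apply (l : ℕ → ℂ) : opK numberOp shiftRight shiftLeft l = Kop l := by
  funext n
  simp [opK, Kop]

end SequenceOperators

theorem commutator_AK_general (l : ℕ → ℂ) (n : ℕ) :
    I * (Aop (Kop l) n - Kop (Aop l) n) = Aop l n := by
  have h := I_smul_lie_opA_opK numberOp_lie_shiftRight numberOp_lie_shiftLeft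
    shiftRight_lie_shiftLeft shiftLeft_mul_shiftRight numberOp_mul_projZero
  have hl := LinearMap.congr_fun h l
  rw [LinearMap.smul_apply, Ring.lie_def, LinearMap.sub_apply, Module.End.mul_apply,
    Module.End.mul_apply, opK_apply, opA_apply, opA_apply, opK_apply] at hl
  exact congrFun hl n

/-- The positive commutator identity `i[A, K] = A` on finitely supported sequences. -/
theorem commutator_AK (l : ℕ → ℂ) (hfin : ∃ N, ∀ n, N ≤ n → l n = 0) (n : ℕ) :
    I * (Aop (Kop l) n - Kop (Aop l) n) = Aop l n :=
  commutator_AK_general l n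
end

section
/- For every fixed x ∈ ℂ, lim_{n→∞} L_n(x²/(4n)) = J₀(x), where L_n is the n-th Laguerre polynomial L_n(κ) = Σ_{k=0}^n ((-κ)^k/k!) C(n,k) and J₀(x) = Σ_{k=0}^∞ (-x²/4)^k/(k!)² is the Bessel function of order zero. -/
open Finset Filter

/-- The Laguerre polynomial `L_n(κ) = Σ_{k=0}^n ((-κ)^k/k!) C(n,k)`. -/
noncomputable def Lag (n : ℕ) (κ : ℂ) : ℂ :=
  ∑ k ∈ range (n + 1), (-κ) ^ k / (k.factorial : ℂ) * (n.choose k : ℂ)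

/-- The Bessel function of order zero, `J₀(x) = Σ_{k=0}^∞ (-x²/4)^k/(k!)²`. -/
noncomputable def J0 (x : ℂ) : ℂ :=
  ∑' k : ℕ, (-x ^ 2 / 4) ^ k / ((k.factorial : ℂ) ^ 2)

/-!
Writing `C(n,k) = n(n-1)⋯(n-k+1)/k!` gives
`L_n(c/n) = Σ_k (-c)^k/(k!)² · n(n-1)⋯(n-k+1)/n^k`, a series in which every weight
`n(n-1)⋯(n-k+1)/n^k` lies in `[0,1]`, vanishes for `k > n` and tends to `1` for fixed `k`.
Since `Σ |c|^k/(k!)²` converges, Tannery's theorem lets the limit pass under the sum, leaving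
`Σ (-c)^k/(k!)² = J₀(x)` for `c = x²/4`.
-/

open Topology Nat Asymptotics

theorem tendsto_tsum_mul_of_tendsto_one {α β 𝕜 : Type*} [NormedDivisionRing 𝕜] [CompleteSpace 𝕜]
    {l : Filter α} {a : β → 𝕜} {r : α → β → 𝕜} (ha : Summable (‖a ·‖))
    (hr_le : ∀ n k, ‖r n k‖ ≤ 1) (hr : ∀ k, Tendsto (r · k) l (𝓝 1)) :
    Tendsto (fun n => ∑' k, a k * r n k) l (𝓝 (∑' k, a k)) := by
  refine tendsto_tsum_of_dominated_convergence ha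
    (fun k => by simpa using (hr k).const_mul (a k)) (.of_forall fun n k => ?_)
  calc ‖a k * r n k‖ = ‖a k‖ * ‖r n k‖ := norm_mul _ _
    _ ≤ ‖a k‖ := mul_le_of_le_one_right (norm_nonneg _) (hr_le n k)

section descFactorial

variable {𝕜 : Type*} [RCLike 𝕜]

theorem RCLike.tendsto_descFactorial_div_pow (k : ℕ) :
    Tendsto (fun n : ℕ => (n.descFactorial k : 𝕜) / n ^ k) atTop (𝓝 1) := by
  have hpow : ∀ᶠ n : ℕ in atTop, (n : ℝ) ^ k ≠ 0 :=
    (eventually_ne_atTop 0).mono fun n hn => pow_ne_zero k (mod_cast hn)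
  have hℝ := (isEquivalent_iff_tendsto_one hpow).mp (isEquivalent_descFactorial k)
  simpa [Function.comp_def] using ((RCLike.continuous_ofReal (K := 𝕜)).tendsto 1).comp hℝ

theorem RCLike.norm_descFactorial_div_pow_le_one (n k : ℕ) :
    ‖(n.descFactorial k : 𝕜) / n ^ k‖ ≤ 1 := by
  rw [norm_div, norm_pow, RCLike.norm_natCast, RCLike.norm_natCast]
  exact div_le_one_of_le₀ (mod_cast n.descFactorial_le_pow k) (by positivity)

end descFactorial

theorem summable_norm_pow_div_factorial_sq (z : ℂ) :
    Summable fun k => ‖z ^ k / (k ! : ℂ) ^ 2‖ := by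
  refine .of_nonneg_of_le (fun _ => norm_nonneg _) (fun k => ?_)
    (Real.summable_pow_div_factorial ‖z‖)
  rw [norm_div, norm_pow, norm_pow, Complex.norm_natCast]
  gcongr
  exact le_self_pow₀ (mod_cast k.factorial_pos) two_ne_zero

theorem Lag_div_natCast_eq_tsum (c : ℂ) (n : ℕ) :
    Lag n (c / n) = ∑' k, (-c) ^ k / (k ! : ℂ) ^ 2 * ((n.descFactorial k : ℂ) / n ^ k) := by
  rw [Lag, tsum_eq_sum (s := range (n + 1))]
  · refine sum_congr rfl fun k _ => ?_
    rw [← neg_div, div_pow, descFactorial_eq_factorial_mul_choose]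
    push_cast
    field_simp
  · intro k hk
    rw [mem_range, not_lt] at hk
    rw [descFactorial_eq_zero_iff_lt.mpr hk, cast_zero, zero_div, mul_zero]

/-- For every fixed `x ∈ ℂ`, `lim_{n→∞} L_n(x²/(4n)) = J₀(x)`. -/
theorem laguerre_tendsto_besselJ0 (x : ℂ) :
    Tendsto (fun n : ℕ => Lag n (x ^ 2 / (4 * n))) atTop (nhds (J0 x)) := by
  have hLag (n : ℕ) : Lag n (x ^ 2 / (4 * n)) =
      ∑' k, (-(x ^ 2 / 4)) ^ k / (k ! : ℂ) ^ 2 * ((n.descFactorial k : ℂ) / n ^ k) := by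
    rw [← div_div, Lag_div_natCast_eq_tsum]
  simp only [hLag, J0, neg_div]
  exact tendsto_tsum_mul_of_tendsto_one (summable_norm_pow_div_factorial_sq _)
    RCLike.norm_descFactorial_div_pow_le_one RCLike.tendsto_descFactorial_div_pow
end
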